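/- Let X be a finite ultrametric space with n points and mst-spectrum σ_1 ≥ ... ≥ σ_{n−1}. Then for any λ > 0 and any simplex λΔ_m with m > n points, 2 d_GH(λΔ_m, X) = max{σ_1 − λ, λ}. -/

import Mathlib

universe u_1 u_2


open Metric

/-- The Gromov–Hausdorff distance between two (bounded) metric spaces: the
infimum of Hausdorff distances between the canonical copies of `X` and `Y`
inside their disjoint union, over all pseudometrics on the disjoint union
extending the metrics of `X` and of `Y`. -/
noncomputable def ghDist (X : Type*) (Y : Type*) [MetricSpace X] [MetricSpace Y] : ℝ :=
  sInf { r : ℝ | ∃ m : PseudoMetricSpace (X ⊕ Y),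
    (∀ x x' : X, @Dist.dist _ m.toDist (Sum.inl x) (Sum.inl x') = dist x x') ∧
    (∀ y y' : Y, @Dist.dist _ m.toDist (Sum.inr y) (Sum.inr y') = dist y y') ∧
    r = @Metric.hausdorffDist (X ⊕ Y) m
        (Set.range Sum.inl) (Set.range Sum.inr) }

/-- The length of an edge of a graph on a metric space: the distance between
its endpoints. -/
noncomputable def edgeLen {X : Type*} [MetricSpace X] : Sym2 X → ℝ :=
  Sym2.lift ⟨fun x y => dist x y, fun x y => dist_comm x y⟩

/-- The total length of a graph on a metric space: the sum of the lengths of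
its edges. -/
noncomputable def graphLength {X : Type*} [MetricSpace X] (G : SimpleGraph X) : ℝ :=
  ∑ᶠ e ∈ G.edgeSet, edgeLen e

/-- `G` is a minimal spanning tree on the metric space `X`: a tree with vertex
set `X` of minimal total length among all such trees. -/
def IsMST {X : Type*} [MetricSpace X] (G : SimpleGraph X) : Prop :=
  G.IsTree ∧ ∀ H : SimpleGraph X, H.IsTree → graphLength G ≤ graphLength H

private lemma min_le_min_add {a b c l : ℝ} (h : a ≤ b + c) (hc : 0 ≤ c) :
    min a l ≤ min b l + c := by
  rcases le_total b l with hb | hb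
  · rw [min_eq_left hb]; exact le_trans (min_le_left a l) h
  · rw [min_eq_right hb]; exact le_trans (min_le_right a l) (by linarith)

/-- The explicit pseudometric on the sum. -/
private noncomputable def sumD {S X : Type*} [MetricSpace S] [MetricSpace X]
    (f : S → X) (D l : ℝ) : S ⊕ X → S ⊕ X → ℝ
  | Sum.inl s, Sum.inl s' => dist s s'
  | Sum.inr x, Sum.inr x' => dist x x'
  | Sum.inl s, Sum.inr x => D / 2 + min (dist (f s) x) l
  | Sum.inr x, Sum.inl s => D / 2 + min (dist (f s) x) l

/-- Lower bound part. -/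
private lemma lower_aux {S : Type u_2} {X : Type u_1} [MetricSpace S] [MetricSpace X]
    [Fintype X] [Nonempty S] [m : PseudoMetricSpace (S ⊕ X)]
    (hm1 : ∀ s s' : S, dist (Sum.inl s : S ⊕ X) (Sum.inl s') = dist s s')
    (hm2 : ∀ x x' : X, dist (Sum.inr x : S ⊕ X) (Sum.inr x') = dist x x')
    (l σ0 : ℝ) (hl : 0 < l)
    (hsim : ∀ s s' : S, s ≠ s' → dist s s' = l)
    (hnoninj : ∀ φ : S → X, ¬ Function.Injective φ)
    (a0 b0 : X) (hσ0 : σ0 = dist a0 b0) :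
    max (σ0 - l) l ≤
      2 * hausdorffDist (Set.range (Sum.inl : S → S ⊕ X)) (Set.range (Sum.inr : X → S ⊕ X)) := by
  have hS_le : ∀ s s' : S, dist s s' ≤ l := by
    intro s s'
    by_cases h : s = s'
    · subst h; simp [hl.le]
    · exact (hsim s s' h).le
  set A := Set.range (Sum.inl : S → S ⊕ X) with hA
  set B := Set.range (Sum.inr : X → S ⊕ X) with hB
  have hAne : A.Nonempty := Set.range_nonempty _
  have hBne : B.Nonempty := by
    have : Nonempty X := ⟨a0⟩
    exact Set.range_nonempty _
  have hAb : Bornology.IsBounded A := by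
    rw [Metric.isBounded_iff]
    refine ⟨l, ?_⟩
    rintro _ ⟨s, rfl⟩ _ ⟨s', rfl⟩
    rw [hm1]; exact hS_le s s'
  have hBb : Bornology.IsBounded B := (Set.finite_range _).isBounded
  have hfin : EMetric.hausdorffEdist A B ≠ ⊤ :=
    hausdorffEdist_ne_top_of_nonempty_of_bounded hAne hBne hAb hBb
  have hr0 : 0 ≤ hausdorffDist A B := hausdorffDist_nonneg
  set r := hausdorffDist A B with hr
  have h1 : l ≤ 2 * r := by
    refine le_of_forall_pos_le_add ?_
    intro ε hε
    have hlt : hausdorffDist A B < r + ε / 2 := by rw [← hr]; linarith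
    have hch : ∀ s : S, ∃ x : X, dist (Sum.inl s : S ⊕ X) (Sum.inr x) < r + ε / 2 := by
      intro s
      obtain ⟨b, hb, hbd⟩ :=
        exists_dist_lt_of_hausdorffDist_lt (Set.mem_range_self s) hlt hfin
      obtain ⟨x, rfl⟩ := hb
      exact ⟨x, hbd⟩
    choose φ hφ using hch
    obtain ⟨s, s', heq, hne⟩ := Function.not_injective_iff.mp (hnoninj φ)
    have h1 : dist (Sum.inl s : S ⊕ X) (Sum.inr (φ s)) < r + ε / 2 := hφ s
    have h2 : dist (Sum.inl s' : S ⊕ X) (Sum.inr (φ s)) < r + ε / 2 := by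
      rw [heq]; exact hφ s'
    have htri : dist (Sum.inl s : S ⊕ X) (Sum.inl s') ≤
        dist (Sum.inl s : S ⊕ X) (Sum.inr (φ s)) + dist (Sum.inr (φ s) : S ⊕ X) (Sum.inl s') :=
      dist_triangle _ _ _
    rw [hm1, hsim s s' hne, dist_comm (Sum.inr (φ s) : S ⊕ X)] at htri
    linarith
  have h2 : σ0 - l ≤ 2 * r := by
    refine sub_le_iff_le_add.mpr (le_of_forall_pos_le_add ?_)
    intro ε hε
    have hlt : hausdorffDist A B < r + ε / 2 := by rw [← hr]; linarith
    obtain ⟨p, hp, hpd⟩ :=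
      exists_dist_lt_of_hausdorffDist_lt' (Set.mem_range_self a0) hlt hfin
    obtain ⟨s, rfl⟩ := hp
    obtain ⟨p', hp', hpd'⟩ :=
      exists_dist_lt_of_hausdorffDist_lt' (Set.mem_range_self b0) hlt hfin
    obtain ⟨s', rfl⟩ := hp'
    have htri : dist (Sum.inr a0 : S ⊕ X) (Sum.inr b0) ≤
        dist (Sum.inr a0 : S ⊕ X) (Sum.inl s) + dist (Sum.inl s : S ⊕ X) (Sum.inl s') +
          dist (Sum.inl s' : S ⊕ X) (Sum.inr b0) := dist_triangle4 _ _ _ _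
    rw [hm2, hm1, dist_comm (Sum.inr a0 : S ⊕ X)] at htri
    have := hS_le s s'
    rw [← hσ0] at htri
    linarith
  exact max_le (by linarith) h1

/-- Let `X` be a finite ultrametric space with `n ≥ 2` points and mst-spectrum
`σ 0 ≥ … ≥ σ (n-2)` (edge lengths of a minimal spanning tree in decreasing
order, zero-based). Then for any `λ > 0` and any simplex `S` with all non-zero
distances `λ` and cardinality strictly greater than `n`,
`2 d_GH(S, X) = max {σ₁ − λ, λ}`. -/
theorem two_ghDist_simplex_ultrametric_card_gt {X : Type u_1} [MetricSpace X] [Fintype X]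
    (hn : 1 < Fintype.card X)
    (ultra : ∀ x y z : X, dist x z ≤ max (dist x y) (dist y z))
    (G : SimpleGraph X) (hG : IsMST G)
    (e : Fin (Fintype.card X - 1) → Sym2 X) (he : Function.Injective e)
    (hrange : Set.range e = G.edgeSet)
    (σ : Fin (Fintype.card X - 1) → ℝ) (hσ : ∀ i, σ i = edgeLen (e i))
    (hdec : ∀ i j, i ≤ j → σ j ≤ σ i)
    (S : Type u_2) [MetricSpace S] (l : ℝ) (hl : 0 < l)
    (hsim : ∀ s s' : S, s ≠ s' → dist s s' = l)
    (hcard : Cardinal.lift.{u_2} (Cardinal.mk X) < Cardinal.lift.{u_1} (Cardinal.mk S)) :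
    2 * ghDist S X = max (σ ⟨0, by omega⟩ - l) l := by
  classical
  have hXne : Nonempty X := Fintype.card_pos_iff.mp (by omega)
  set i0 : Fin (Fintype.card X - 1) := ⟨0, by omega⟩ with hi0
  show 2 * ghDist S X = max (σ i0 - l) l
  -- endpoints of the longest edge
  obtain ⟨a0, b0, hab0⟩ : ∃ a b, e i0 = s(a, b) := (e i0).inductionOn fun x y => ⟨x, y, rfl⟩
  have hadj : G.Adj a0 b0 := by
    rw [← SimpleGraph.mem_edgeSet, ← hab0, ← hrange]; exact ⟨i0, rfl⟩
  have hσ0 : σ i0 = dist a0 b0 := by rw [hσ, hab0]; simp [edgeLen]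
  have hσ0pos : 0 < σ i0 := by rw [hσ0]; exact dist_pos.mpr hadj.ne
  -- all edges are at most σ0
  have hedge : ∀ a b : X, G.Adj a b → dist a b ≤ σ i0 := by
    intro a b hab
    have hmem : s(a, b) ∈ Set.range e := by rw [hrange]; exact hab
    obtain ⟨i, hi⟩ := hmem
    have h1 : edgeLen (e i) = dist a b := by rw [hi]; simp [edgeLen]
    have h2 := hdec i0 i (by show (0:ℕ) ≤ i.val; exact Nat.zero_le _)
    rw [hσ, h1] at h2
    exact h2
  -- diameter bound
  have hXdiam : ∀ x y : X, dist x y ≤ σ i0 := by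
    have key : ∀ x y : X, G.Walk x y → dist x y ≤ σ i0 := by
      intro x y w
      induction w with
      | nil => simpa using hσ0pos.le
      | cons h p ih => exact le_trans (ultra _ _ _) (max_le (hedge _ _ h) ih)
    intro x y
    exact key x y (hG.1.isConnected.preconnected x y).some
  -- S is nonempty
  have hSne : Nonempty S := by
    rw [← Cardinal.mk_ne_zero_iff]
    intro h
    rw [h, Cardinal.lift_zero] at hcard
    exact (zero_le (a := Cardinal.lift.{u_2} (Cardinal.mk X))).not_gt hcard
  -- a surjection from S onto X
  obtain ⟨g⟩ : Nonempty (X ↪ S) := Cardinal.lift_mk_le'.mp hcard.le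
  set f : S → X := Function.invFun g with hf
  have hfsurj : Function.Surjective f := Function.invFun_surjective g.injective
  have hnoninj : ∀ φ : S → X, ¬ Function.Injective φ := by
    intro φ hφ
    exact absurd (Cardinal.lift_mk_le'.mpr ⟨⟨φ, hφ⟩⟩) (not_le.mpr hcard)
  set D := max (σ i0 - l) l with hD
  have hlD : l ≤ D := le_max_right _ _
  have hD0 : 0 ≤ D := hl.le.trans hlD
  have hσD : σ i0 ≤ D + l := by
    rcases max_cases (σ i0 - l) l with ⟨h1, _⟩ | ⟨h1, h2⟩ <;> rw [hD, h1] <;> linarith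
  have hS_le : ∀ s s' : S, dist s s' ≤ l := by
    intro s s'
    by_cases h : s = s'
    · subst h; simp [hl.le]
    · exact (hsim s s' h).le
  -- the explicit pseudometric
  set d : S ⊕ X → S ⊕ X → ℝ := sumD f D l with hd
  have hdLL : ∀ s s', d (Sum.inl s) (Sum.inl s') = dist s s' := fun _ _ => rfl
  have hdRR : ∀ x x', d (Sum.inr x) (Sum.inr x') = dist x x' := fun _ _ => rfl
  have hdLR : ∀ s x, d (Sum.inl s) (Sum.inr x) = D / 2 + min (dist (f s) x) l := fun _ _ => rfl
  have hdRL : ∀ x s, d (Sum.inr x) (Sum.inl s) = D / 2 + min (dist (f s) x) l := fun _ _ => rfl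
  have hmin0 : ∀ (x : X) (s : S), 0 ≤ min (dist (f s) x) l := fun x s =>
    le_min dist_nonneg hl.le
  have hXD : ∀ (x x' : X) (s : S),
      dist x x' ≤ D + min (dist (f s) x) l + min (dist (f s) x') l := by
    intro x x' s
    rcases le_total (dist (f s) x) l with h1 | h1
    · rcases le_total (dist (f s) x') l with h2 | h2
      · rw [min_eq_left h1, min_eq_left h2]
        have := dist_triangle x (f s) x'
        rw [dist_comm x (f s)] at this
        linarith
      · rw [min_eq_left h1, min_eq_right h2]
        have := (hXdiam x x').trans hσD
        linarith [dist_nonneg (x := f s) (y := x)]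
    · rw [min_eq_right h1]
      have := (hXdiam x x').trans hσD
      linarith [hmin0 x' s]
  have dtri : ∀ p q u : S ⊕ X, d p u ≤ d p q + d q u := by
    rintro (s | x) (s' | x') (s'' | x'')
    · rw [hdLL, hdLL, hdLL]; exact dist_triangle _ _ _
    · rw [hdLR, hdLL, hdLR]
      by_cases h : s = s'
      · subst h; simp
      · have := hsim s s' h
        have := min_le_right (dist (f s) x'') l
        linarith [hmin0 x'' s']
    · rw [hdLL, hdLR, hdRL]
      have := hS_le s s''
      linarith [hmin0 x' s, hmin0 x' s'']
    · rw [hdLR, hdLR, hdRR]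
      have h := min_le_min_add (c := dist x' x'') (l := l)
        (dist_triangle (f s) x' x'') dist_nonneg
      linarith
    · rw [hdRL, hdRL, hdLL]
      by_cases h : s' = s''
      · subst h; simp
      · have := hsim s' s'' h
        have := min_le_right (dist (f s'') x) l
        linarith [hmin0 x s']
    · rw [hdRR, hdRL, hdLR]
      have := hXD x x'' s'
      linarith
    · rw [hdRL, hdRR, hdRL]
      have h := min_le_min_add (c := dist x' x) (l := l)
        (dist_triangle (f s'') x' x) dist_nonneg
      rw [dist_comm x' x] at h
      linarith
    · rw [hdRR, hdRR, hdRR]; exact dist_triangle _ _ _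
  have dsymm : ∀ p q : S ⊕ X, d p q = d q p := by
    rintro (s | x) (s' | x')
    · rw [hdLL, hdLL, dist_comm]
    · rw [hdLR, hdRL]
    · rw [hdRL, hdLR]
    · rw [hdRR, hdRR, dist_comm]
  have dself : ∀ p : S ⊕ X, d p p = 0 := by
    rintro (s | x)
    · rw [hdLL, dist_self]
    · rw [hdRR, dist_self]
  let m : PseudoMetricSpace (S ⊕ X) :=
    { dist := d
      dist_self := dself
      dist_comm := dsymm
      dist_triangle := dtri }
  -- the set in the definition of ghDist
  set SET := { r : ℝ | ∃ m : PseudoMetricSpace (S ⊕ X),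
    (∀ x x' : S, @Dist.dist _ m.toDist (Sum.inl x) (Sum.inl x') = dist x x') ∧
    (∀ y y' : X, @Dist.dist _ m.toDist (Sum.inr y) (Sum.inr y') = dist y y') ∧
    r = @Metric.hausdorffDist (S ⊕ X) m
        (Set.range Sum.inl) (Set.range Sum.inr) } with hSET
  have hgh : ghDist S X = sInf SET := rfl
  have hub : @hausdorffDist (S ⊕ X) m (Set.range Sum.inl) (Set.range Sum.inr) ≤ D / 2 := by
    refine @hausdorffDist_le_of_mem_dist (S ⊕ X) m _ _ (D / 2) (by linarith) ?_ ?_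
    · rintro _ ⟨s, rfl⟩
      refine ⟨Sum.inr (f s), ⟨f s, rfl⟩, ?_⟩
      show d (Sum.inl s) (Sum.inr (f s)) ≤ D / 2
      rw [hdLR, dist_self, min_eq_left hl.le]
      linarith
    · rintro _ ⟨x, rfl⟩
      obtain ⟨s, rfl⟩ := hfsurj x
      refine ⟨Sum.inl s, ⟨s, rfl⟩, ?_⟩
      show d (Sum.inr (f s)) (Sum.inl s) ≤ D / 2
      rw [hdRL, dist_self, min_eq_left hl.le]
      linarith
  have hmem : @hausdorffDist (S ⊕ X) m (Set.range Sum.inl) (Set.range Sum.inr) ∈ SET :=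
    ⟨m, fun _ _ => rfl, fun _ _ => rfl, rfl⟩
  have hlow : ∀ r ∈ SET, D / 2 ≤ r := by
    rintro r ⟨m', hm1, hm2, rfl⟩
    have := @lower_aux S X _ _ _ hSne m' hm1 hm2 l (σ i0) hl hsim hnoninj a0 b0 hσ0
    rw [← hD] at this
    linarith
  have h1 : ghDist S X ≤ D / 2 := by
    rw [hgh]
    exact le_trans (csInf_le ⟨D / 2, hlow⟩ hmem) hub
  have h2 : D / 2 ≤ ghDist S X := by
    rw [hgh]
    exact le_csInf ⟨_, hmem⟩ hlow
  have : ghDist S X = D / 2 := le_antisymm h1 h2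
  rw [this, hD]
  ring
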